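/- With the Malitsky–Tam operator T for closed subspaces U₁,…,Uₙ of X and Z = ∩U_i: for z = (z₁,…,z_{n−1}) ∈ X^{n−1} with z̄ = (z₁+⋯+z_{n−1})/(n−1), the projection onto Fix T satisfies P_{Fix T}(z) = (P_Z z̄, …, P_Z z̄) + P_E(z), where E = ran Ψ ∩ (X^{n−2} × Uₙ^⊥); consequently P₁(Q₁ P_{Fix T} z) = P_Z z̄. -/

import Mathlib

open Filter

variable {X : Type*} [NormedAddCommGroup X] [InnerProductSpace ℝ X] [CompleteSpace X]

/-- The orthogonal projection onto a subspace, as a map `X → X`. -/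
noncomputable def pr (U : Submodule ℝ X) [Submodule.HasOrthogonalProjection U] (x : X) : X :=
  U.orthogonalProjectionOnto x

/-- Extension of a tuple in `X^m` to an `ℕ`-indexed family (by zero). -/
noncomputable def extz {m : ℕ} (z : PiLp 2 (fun _ : Fin m => X)) : ℕ → X :=
  fun i => if h : i < m then z ⟨i, h⟩ else 0

/-- The auxiliary sequence `x₁, …, xₙ` of the Malitsky–Tam operator (0-based indexing):
`x 0 = P₀ (z 0)`, `x i = Pᵢ (x (i−1) + z i − z (i−1))` for `1 ≤ i ≤ n − 2`, and
`x (n−1) = P_{n−1} (x 0 + x (n−2) − z (n−2))`. -/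
noncomputable def mtX (n : ℕ) (U : ℕ → Submodule ℝ X) [∀ i, Submodule.HasOrthogonalProjection (U i)]
    (z : ℕ → X) : ℕ → X
  | 0 => pr (U 0) (z 0)
  | (i + 1) =>
      if i + 1 ≤ n - 2 then pr (U (i + 1)) (mtX n U z i + z (i + 1) - z i)
      else if i + 1 = n - 1 then pr (U (n - 1)) (mtX n U z 0 + mtX n U z i - z i)
      else 0

/-- The Malitsky–Tam operator `T z = z + (x₂ − x₁, …, xₙ − x_{n−1})` on `X^{n−1}`. -/
noncomputable def mtT (n : ℕ) (U : ℕ → Submodule ℝ X) [∀ i, Submodule.HasOrthogonalProjection (U i)]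
    (z : PiLp 2 (fun _ : Fin (n - 1) => X)) : PiLp 2 (fun _ : Fin (n - 1) => X) :=
  (WithLp.equiv 2 (∀ _ : Fin (n - 1), X)).symm fun j =>
    z j + (mtX n U (extz z) ((j : ℕ) + 1) - mtX n U (extz z) (j : ℕ))

/-- The diagonal embedding `X → X^m`, `x ↦ (x, …, x)`, as a linear map into `ℓ²`-product. -/
noncomputable def diagMap (m : ℕ) (X : Type*) [NormedAddCommGroup X]
    [InnerProductSpace ℝ X] : X →ₗ[ℝ] PiLp 2 (fun _ : Fin m => X) :=
  (WithLp.linearEquiv 2 ℝ (∀ _ : Fin m, X)).symm.toLinearMap ∘ₗ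
    LinearMap.pi fun _ => LinearMap.id

/-- The partial-sum operator `(y₁, …, y_m) ↦ (y₁, y₁ + y₂, …, y₁ + ⋯ + y_m)` on `X^m`. -/
noncomputable def psumL (m : ℕ) (X : Type*) [NormedAddCommGroup X]
    [InnerProductSpace ℝ X] :
    PiLp 2 (fun _ : Fin m => X) →ₗ[ℝ] PiLp 2 (fun _ : Fin m => X) :=
  (WithLp.linearEquiv 2 ℝ (∀ _ : Fin m, X)).symm.toLinearMap ∘ₗ
    (LinearMap.pi fun j : Fin m =>
      ∑ i ∈ Finset.univ.filter (fun i : Fin m => i ≤ j), LinearMap.proj i) ∘ₗ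
    (WithLp.linearEquiv 2 ℝ (∀ _ : Fin m, X)).toLinearMap

/-- The range of the partial-sum operator `Ψ` restricted to `U₁^⊥ × ⋯ × U_m^⊥`. -/
noncomputable def ranPsi (m : ℕ) (U : ℕ → Submodule ℝ X) :
    Submodule ℝ (PiLp 2 (fun _ : Fin m => X)) :=
  Submodule.map (psumL m X)
    (Submodule.comap (WithLp.linearEquiv 2 ℝ (∀ _ : Fin m, X)).toLinearMap
      (Submodule.pi Set.univ fun j : Fin m => (U (j : ℕ))ᗮ))

/-! Fixed points of `T` are exactly the tuples `(d, …, d) + Ψ u` with `d ∈ Z`,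
`uⱼ ∈ (U j)ᗮ` and `(Ψ u)_{n-2} ∈ (U (n-1))ᗮ`: the auxiliary sequence of `T` at `y` is constant,
equal to `d`, precisely when the successive differences of `y - (d, …, d)` lie in the orthogonal
complements of the corresponding `U j`. So `Fix T = D ⊔ E`, and `D ⟂ E` because every coordinate
of `Ψ u` is a sum of vectors orthogonal to `Z`. Now `(w, …, w) + e ∈ D ⊔ E`, and `z` minus it is
orthogonal to `E` (as `z - e` is) and to `D`, since
`⟪z - (w, …, w), (d, …, d)⟫ = (n - 1) ⟪z̄ - w, d⟫`; hence it is the nearest point of `Fix T` to `z`.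
Its first coordinate is `w + e₀` with `e₀ ∈ (U 0)ᗮ`, so `P₀` maps it to `w`. -/

open scoped InnerProductSpace

lemma Submodule.eq_of_sub_mem_orthogonal {𝕜 E : Type*} [RCLike 𝕜] [NormedAddCommGroup E]
    [InnerProductSpace 𝕜 E] (K : Submodule 𝕜 E) {z f g : E} (hf : f ∈ K) (hg : g ∈ K)
    (hzf : z - f ∈ Kᗮ) (hzg : z - g ∈ Kᗮ) : f = g := by
  have hfg : f - g ∈ K ⊓ Kᗮ :=
    ⟨K.sub_mem hf hg, by simpa using Kᗮ.sub_mem hzg hzf⟩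
  rwa [K.inf_orthogonal_eq_bot, Submodule.mem_bot, sub_eq_zero] at hfg

lemma Submodule.mem_map_sup_iff {R M N : Type*} [Ring R] [AddCommGroup M] [AddCommGroup N]
    [Module R M] [Module R N] (f : M →ₗ[R] N) (Z : Submodule R M) (E : Submodule R N) (y : N) :
    y ∈ Z.map f ⊔ E ↔ ∃ d ∈ Z, y - f d ∈ E := by
  rw [Submodule.mem_sup]
  constructor
  · rintro ⟨_, ⟨d, hd, rfl⟩, e, he, rfl⟩
    exact ⟨d, hd, by rwa [add_sub_cancel_left]⟩
  · rintro ⟨d, hd, he⟩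
    exact ⟨f d, ⟨d, hd, rfl⟩, y - f d, he, add_sub_cancel _ _⟩

lemma extz_of_lt {E : Type*} [NormedAddCommGroup E] {m : ℕ} (v : PiLp 2 (fun _ : Fin m => E))
    {k : ℕ} (hk : k < m) : extz v k = v ⟨k, hk⟩ :=
  dif_pos hk

section

variable {H : Type*} [NormedAddCommGroup H] [InnerProductSpace ℝ H]

lemma pr_eq_iff (U : Submodule ℝ H) [U.HasOrthogonalProjection] {x d : H} :
    pr U x = d ↔ d ∈ U ∧ x - d ∈ Uᗮ := by
  refine ⟨?_, fun h => Submodule.eq_starProjection_of_mem_orthogonal h.1 h.2⟩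
  rintro rfl
  exact ⟨(U.orthogonalProjectionOnto x).2, U.sub_starProjection_mem_orthogonal x⟩

lemma Submodule.sub_mem_orthogonal_of_forall_norm_sub_le (K : Submodule ℝ H) {z f : H}
    (hf : f ∈ K) (hmin : ∀ q ∈ K, ‖z - f‖ ≤ ‖z - q‖) : z - f ∈ Kᗮ := by
  have hinf : ‖z - f‖ = ⨅ q : (K : Set H), ‖z - q‖ :=
    le_antisymm (le_ciInf fun q => hmin q q.2)
      (ciInf_le ⟨0, by rintro _ ⟨q, rfl⟩; exact norm_nonneg (z - q)⟩ (⟨f, hf⟩ : (K : Set H)))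
  exact (K.mem_orthogonal' _).2 ((K.norm_eq_iInf_iff_real_inner_eq_zero hf).1 hinf)

lemma diagMap_apply (m : ℕ) (w : H) (j : Fin m) : diagMap m H w j = w := rfl

lemma inner_diagMap_right {m : ℕ} (z : PiLp 2 (fun _ : Fin m => H)) (d : H) :
    ⟪z, diagMap m H d⟫_ℝ = ⟪∑ j, z j, d⟫_ℝ := by
  rw [PiLp.inner_apply, sum_inner]
  rfl

lemma sub_diagMap_mem_orthogonal_map {m : ℕ} (hm : m ≠ 0) (Z : Submodule ℝ H)
    (z : PiLp 2 (fun _ : Fin m => H)) {w : H} (hw : (m : ℝ)⁻¹ • ∑ j, z j - w ∈ Zᗮ) :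
    z - diagMap m H w ∈ (Z.map (diagMap m H))ᗮ := by
  rw [Submodule.mem_orthogonal']
  rintro _ ⟨d, hd, rfl⟩
  have hsum : ∑ j, z j - ∑ _ : Fin m, w = (m : ℝ) • ((m : ℝ)⁻¹ • ∑ j, z j - w) := by
    rw [smul_sub, smul_inv_smul₀ (by exact_mod_cast hm), Finset.sum_const, Finset.card_univ,
      Fintype.card_fin, Nat.cast_smul_eq_nsmul]
  rw [inner_diagMap_right]
  simp only [PiLp.sub_apply, diagMap_apply, Finset.sum_sub_distrib]
  rw [hsum, real_inner_smul_left, (Submodule.mem_orthogonal' _ _).1 hw d hd, mul_zero]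

lemma psumL_apply (m : ℕ) (u : PiLp 2 (fun _ : Fin m => H)) (j : Fin m) :
    psumL m H u j = ∑ i with i ≤ j, u i := by
  simp [psumL, WithLp.linearEquiv, LinearMap.pi_apply]

lemma extz_psumL {m : ℕ} (u : PiLp 2 (fun _ : Fin m => H)) {k : ℕ} (hk : k < m) :
    extz (psumL m H u) k = ∑ i ∈ Finset.range (k + 1), extz u i := by
  rw [extz_of_lt _ hk, psumL_apply, Finset.sum_filter]
  calc (∑ i : Fin m, if i ≤ ⟨k, hk⟩ then u i else 0)
      = ∑ i : Fin m, if (i : ℕ) ≤ k then extz u i else 0 :=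
        Finset.sum_congr rfl fun i _ => by simp only [Fin.le_def, extz_of_lt u i.2]
    _ = ∑ i ∈ Finset.range m, if i ≤ k then extz u i else 0 :=
        Fin.sum_univ_eq_sum_range (fun i => if i ≤ k then extz u i else 0) m
    _ = ∑ i ∈ Finset.range (k + 1), extz u i := by
        rw [← Finset.sum_filter]
        congr 1
        ext i
        simp only [Finset.mem_filter, Finset.mem_range]
        omega

lemma isOrtho_map_diagMap_ranPsi {m : ℕ} (U : ℕ → Submodule ℝ H) (Z : Submodule ℝ H)
    (hZ : ∀ j < m, Z ≤ U j) : Z.map (diagMap m H) ⟂ ranPsi m U := by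
  rw [Submodule.isOrtho_iff_inner_eq]
  rintro _ ⟨d, hd, rfl⟩ _ ⟨u, hu, rfl⟩
  rw [real_inner_comm, inner_diagMap_right, sum_inner]
  refine Finset.sum_eq_zero fun j _ => ?_
  rw [psumL_apply, sum_inner]
  refine Finset.sum_eq_zero fun i _ => ?_
  exact Submodule.inner_left_of_mem_orthogonal (hZ i i.2 hd) (hu i trivial)

lemma mem_ranPsi_iff {m : ℕ} (U : ℕ → Submodule ℝ H) (v : PiLp 2 (fun _ : Fin m => H)) :
    v ∈ ranPsi m U ↔ extz v 0 ∈ (U 0)ᗮ ∧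
      ∀ k, k + 1 < m → extz v (k + 1) - extz v k ∈ (U (k + 1))ᗮ := by
  constructor
  · rintro ⟨u, hu, rfl⟩
    have hextz : ∀ k, extz u k ∈ (U k)ᗮ := fun k => by
      by_cases hk : k < m
      · rw [extz_of_lt u hk]
        exact hu ⟨k, hk⟩ trivial
      · rw [extz, dif_neg hk]
        exact zero_mem _
    refine ⟨?_, fun k hk => ?_⟩
    · by_cases hm : 0 < m
      · rw [extz_psumL u hm, Finset.sum_range_one]
        exact hextz 0
      · rw [extz, dif_neg hm]
        exact zero_mem _
    · rw [extz_psumL u hk, extz_psumL u (by omega), Finset.sum_range_succ, add_sub_cancel_left]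
      exact hextz (k + 1)
  · rintro ⟨h0, hstep⟩
    -- `u` lists the successive differences of `v`, so `Ψ u = v` is a telescoping sum.
    let g : ℕ → H := fun i => if i = 0 then 0 else extz v (i - 1)
    have hg : ∀ i, g (i + 1) = extz v i := fun i => if_neg i.succ_ne_zero
    let u : PiLp 2 (fun _ : Fin m => H) := WithLp.toLp 2 fun j => g (j + 1) - g j
    refine ⟨u, fun j _ => ?_, ?_⟩
    · obtain ⟨_ | k, hk⟩ := j
      · simpa [u, g] using h0
      · simpa [u, hg] using hstep k hk
    · ext j
      have hu : ∀ i ∈ Finset.range (j + 1), extz u i = g (i + 1) - g i := fun i hi =>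
        extz_of_lt u (lt_of_lt_of_le (Finset.mem_range.1 hi) j.2)
      have hsum := extz_psumL u j.2
      rw [Finset.sum_congr rfl hu, Finset.sum_range_sub, hg, extz_of_lt _ j.2, extz_of_lt _ j.2]
        at hsum
      simpa [g] using hsum

-- The summand `E` of `Fix T = D ⊕ E`, written exactly as in the statement.
noncomputable def mtE (n : ℕ) (hn : 2 ≤ n) (U : ℕ → Submodule ℝ H) :
    Submodule ℝ (PiLp 2 (fun _ : Fin (n - 1) => H)) :=
  ranPsi (n - 1) U ⊓
    Submodule.comap
      ((LinearMap.proj (⟨n - 2, by omega⟩ : Fin (n - 1))).comp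
        (WithLp.linearEquiv 2 ℝ (∀ _ : Fin (n - 1), H)).toLinearMap)
      (U (n - 1))ᗮ

lemma extz_sub_diagMap {m : ℕ} (y : PiLp 2 (fun _ : Fin m => H)) (d : H) {k : ℕ} (hk : k < m) :
    extz (y - diagMap m H d) k = extz y k - d := by
  rw [extz_of_lt _ hk, extz_of_lt _ hk]
  rfl

lemma sub_diagMap_mem_mtE_iff {n : ℕ} (hn : 2 ≤ n) (U : ℕ → Submodule ℝ H)
    (y : PiLp 2 (fun _ : Fin (n - 1) => H)) (d : H) :
    y - diagMap (n - 1) H d ∈ mtE n hn U ↔ extz y 0 - d ∈ (U 0)ᗮ ∧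
      (∀ k, k + 1 ≤ n - 2 → extz y (k + 1) - extz y k ∈ (U (k + 1))ᗮ) ∧
      extz y (n - 2) - d ∈ (U (n - 1))ᗮ := by
  have hlast : (y - diagMap (n - 1) H d) ⟨n - 2, by omega⟩ = extz y (n - 2) - d := by
    rw [← extz_of_lt _ (by omega), extz_sub_diagMap y d (by omega)]
  have hstep : ∀ k, k + 1 ≤ n - 2 → (extz (y - diagMap (n - 1) H d) (k + 1) -
      extz (y - diagMap (n - 1) H d) k = extz y (k + 1) - extz y k) := fun k hk => by
    rw [extz_sub_diagMap y d (by omega), extz_sub_diagMap y d (by omega),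
      sub_sub_sub_cancel_right]
  rw [mtE, Submodule.mem_inf, mem_ranPsi_iff, extz_sub_diagMap y d (by omega), and_assoc]
  refine and_congr Iff.rfl (and_congr (forall_congr' fun k => ?_) ?_)
  · rw [show k + 1 < n - 1 ↔ k + 1 ≤ n - 2 by omega]
    exact imp_congr_right fun hk => by rw [hstep k hk]
  · exact Iff.of_eq (congrArg (· ∈ (U (n - 1))ᗮ) hlast)

end

section MalitskyTam

variable {H : Type*} [NormedAddCommGroup H] [InnerProductSpace ℝ H]
  {n : ℕ} {U : ℕ → Submodule ℝ H} [∀ i, (U i).HasOrthogonalProjection] {s : ℕ → H} {d : H}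

lemma mtX_zero_eq_iff : mtX n U s 0 = d ↔ d ∈ U 0 ∧ s 0 - d ∈ (U 0)ᗮ := by
  rw [mtX, pr_eq_iff]

lemma mtX_succ_eq_iff {k : ℕ} (hk : k + 1 ≤ n - 2) (hprev : mtX n U s k = d) :
    mtX n U s (k + 1) = d ↔ d ∈ U (k + 1) ∧ s (k + 1) - s k ∈ (U (k + 1))ᗮ := by
  rw [mtX, if_pos hk, hprev, pr_eq_iff, add_sub_assoc, add_sub_cancel_left]

lemma mtX_last_eq_iff (hn : 2 ≤ n) (h0 : mtX n U s 0 = d) (hprev : mtX n U s (n - 2) = d) :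
    mtX n U s (n - 1) = d ↔ d ∈ U (n - 1) ∧ s (n - 2) - d ∈ (U (n - 1))ᗮ := by
  have e : n - 1 = n - 2 + 1 := by omega
  rw [e, mtX, if_neg (by omega), if_pos (by omega), h0, hprev, ← e, pr_eq_iff,
    add_sub_assoc, add_sub_cancel_left, ← neg_sub, neg_mem_iff]

lemma mtX_eq_const_iff (hn : 2 ≤ n) :
    (∀ k ≤ n - 1, mtX n U s k = d) ↔ (∀ k ≤ n - 1, d ∈ U k) ∧ s 0 - d ∈ (U 0)ᗮ ∧
      (∀ k, k + 1 ≤ n - 2 → s (k + 1) - s k ∈ (U (k + 1))ᗮ) ∧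
      s (n - 2) - d ∈ (U (n - 1))ᗮ := by
  constructor
  · intro h
    have hlast := (mtX_last_eq_iff hn (h 0 (Nat.zero_le _)) (h (n - 2) (by omega))).1
      (h (n - 1) le_rfl)
    have hsucc : ∀ k, k + 1 ≤ n - 2 → d ∈ U (k + 1) ∧ s (k + 1) - s k ∈ (U (k + 1))ᗮ :=
      fun k hk => (mtX_succ_eq_iff hk (h k (by omega))).1 (h (k + 1) (by omega))
    refine ⟨fun k hk => ?_, (mtX_zero_eq_iff.1 (h 0 (Nat.zero_le _))).2,
      fun k hk => (hsucc k hk).2, hlast.2⟩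
    rcases k with _ | k
    · exact (mtX_zero_eq_iff.1 (h 0 (Nat.zero_le _))).1
    · by_cases hk' : k + 1 ≤ n - 2
      · exact (hsucc k hk').1
      · rw [show k + 1 = n - 1 by omega]
        exact hlast.1
  · rintro ⟨hU, h0, hstep, hlast⟩
    have hinit : ∀ k ≤ n - 2, mtX n U s k = d := by
      intro k hk
      induction k with
      | zero => exact mtX_zero_eq_iff.2 ⟨hU 0 (Nat.zero_le _), h0⟩
      | succ k ih =>
        exact (mtX_succ_eq_iff hk (ih (by omega))).2 ⟨hU (k + 1) (by omega), hstep k hk⟩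
    intro k hk
    by_cases hk' : k ≤ n - 2
    · exact hinit k hk'
    · rw [show k = n - 1 by omega]
      exact (mtX_last_eq_iff hn (hinit 0 (Nat.zero_le _)) (hinit (n - 2) le_rfl)).2
        ⟨hU (n - 1) le_rfl, hlast⟩

lemma mtT_apply (y : PiLp 2 (fun _ : Fin (n - 1) => H)) (j : Fin (n - 1)) :
    mtT n U y j = y j + (mtX n U (extz y) (j + 1) - mtX n U (extz y) j) :=
  rfl

lemma mtT_eq_self_iff_exists (y : PiLp 2 (fun _ : Fin (n - 1) => H)) :
    mtT n U y = y ↔ ∃ d, ∀ k ≤ n - 1, mtX n U (extz y) k = d := by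
  constructor
  · intro h
    refine ⟨mtX n U (extz y) 0, fun k hk => ?_⟩
    induction k with
    | zero => rfl
    | succ k ih =>
      have hk' := congrArg (fun v => v ⟨k, by omega⟩) h
      simp only [mtT_apply, add_eq_left, sub_eq_zero] at hk'
      rw [hk', ih (by omega)]
  · rintro ⟨d, hd⟩
    ext j
    rw [mtT_apply, hd (j + 1) (by omega), hd j (by omega), sub_self, add_zero]

lemma mtT_eq_self_iff (hn : 2 ≤ n) (y : PiLp 2 (fun _ : Fin (n - 1) => H)) :
    mtT n U y = y ↔ y ∈ (⨅ i : Fin n, U i).map (diagMap (n - 1) H) ⊔ mtE n hn U := by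
  rw [mtT_eq_self_iff_exists, Submodule.mem_map_sup_iff]
  refine exists_congr fun d => ?_
  have hZ : d ∈ ⨅ i : Fin n, U i ↔ ∀ k ≤ n - 1, d ∈ U k := by
    rw [Submodule.mem_iInf]
    exact ⟨fun h k hk => h ⟨k, by omega⟩, fun h i => h i (by omega)⟩
  rw [mtX_eq_const_iff hn, sub_diagMap_mem_mtE_iff, hZ]

end MalitskyTam

/-- with `T` the Malitsky–Tam operator, `Fix T = D ⊕ E`, and
`z̄ = (z₀ + ⋯ + z_{n−2})/(n−1)`: `P_{Fix T} z = (P_Z z̄, …, P_Z z̄) + P_E z`, and consequently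
`P₀ ((P_{Fix T} z)₀) = P_Z z̄`.  Here `P_Z z̄` and `P_E z` are characterized by orthogonality
and `P_{Fix T} z` by the nearest-point property. -/
theorem stmt16 (n : ℕ) (hn : 3 ≤ n) (U : ℕ → Submodule ℝ X) [∀ i, CompleteSpace (U i)]
    (z : PiLp 2 (fun _ : Fin (n - 1) => X)) :
    ∀ w : X,
      (w ∈ (⨅ i : Fin n, U (i : ℕ)) ∧
        ((n : ℝ) - 1)⁻¹ • (∑ j : Fin (n - 1), z j) - w ∈ (⨅ i : Fin n, U (i : ℕ))ᗮ) →
    ∀ f : PiLp 2 (fun _ : Fin (n - 1) => X),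
      (f ∈ {y : PiLp 2 (fun _ : Fin (n - 1) => X) | mtT n U y = y} ∧
        ∀ q ∈ {y : PiLp 2 (fun _ : Fin (n - 1) => X) | mtT n U y = y},
          ‖z - f‖ ≤ ‖z - q‖) →
    ∀ e : PiLp 2 (fun _ : Fin (n - 1) => X),
      (e ∈ ranPsi (n - 1) U ⊓
          Submodule.comap
            ((LinearMap.proj (⟨n - 2, by omega⟩ : Fin (n - 1))).comp
              (WithLp.linearEquiv 2 ℝ (∀ _ : Fin (n - 1), X)).toLinearMap)
            (U (n - 1))ᗮ ∧
        z - e ∈ (ranPsi (n - 1) U ⊓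
          Submodule.comap
            ((LinearMap.proj (⟨n - 2, by omega⟩ : Fin (n - 1))).comp
              (WithLp.linearEquiv 2 ℝ (∀ _ : Fin (n - 1), X)).toLinearMap)
            (U (n - 1))ᗮ)ᗮ) →
    f = diagMap (n - 1) X w + e ∧ pr (U 0) (f ⟨0, by omega⟩) = w := by
  rintro w ⟨hwZ, hwz⟩ f ⟨hfix, hmin⟩ e ⟨heE, hzeE⟩
  change e ∈ mtE n (by omega) U at heE
  change z - e ∈ (mtE n (by omega) U)ᗮ at hzeE
  set Z := ⨅ i : Fin n, U i
  set D := Z.map (diagMap (n - 1) X)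
  set E := mtE n (by omega : 2 ≤ n) U
  have hFix : ∀ q, mtT n U q = q ↔ q ∈ D ⊔ E := fun q => mtT_eq_self_iff (by omega) q
  have hDE : D ⟂ E := (isOrtho_map_diagMap_ranPsi U Z fun j hj =>
    iInf_le (fun i : Fin n => U i) ⟨j, by omega⟩).mono_right inf_le_left
  have hfF : f ∈ D ⊔ E := (hFix f).1 hfix
  have hzf : z - f ∈ (D ⊔ E)ᗮ := (D ⊔ E).sub_mem_orthogonal_of_forall_norm_sub_le hfF
    fun q hq => hmin q ((hFix q).2 hq)
  have hgF : diagMap (n - 1) X w + e ∈ D ⊔ E :=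
    add_mem (Submodule.mem_sup_left ⟨w, hwZ, rfl⟩) (Submodule.mem_sup_right heE)
  have hzg : z - (diagMap (n - 1) X w + e) ∈ (D ⊔ E)ᗮ := by
    have hcast : ((n - 1 : ℕ) : ℝ) = n - 1 := by rw [Nat.cast_pred (by omega)]
    rw [← Submodule.inf_orthogonal]
    refine ⟨?_, ?_⟩
    · rw [← sub_sub]
      exact sub_mem (sub_diagMap_mem_orthogonal_map (by omega) Z z (by rwa [hcast]))
        (hDE.ge heE)
    · rw [sub_add_eq_sub_sub_swap]
      exact sub_mem hzeE (hDE.le ⟨w, hwZ, rfl⟩)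
  have hfg : f = diagMap (n - 1) X w + e := (D ⊔ E).eq_of_sub_mem_orthogonal hfF hgF hzf hzg
  have he0 : e ⟨0, by omega⟩ ∈ (U 0)ᗮ := by
    rw [← extz_of_lt e]
    exact ((mem_ranPsi_iff U e).1 heE.1).1
  refine ⟨hfg, (pr_eq_iff _).2 ⟨(Submodule.mem_iInf _).1 hwZ ⟨0, by omega⟩, ?_⟩⟩
  rw [hfg, PiLp.add_apply, diagMap_apply, add_sub_cancel_left]
  exact he0
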